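/- For n ≥ 2, 1 ≤ s ≤ n, and 0 ≤ r ≤ n-1, the recurrence B^+(n,-s,r) = Σ_{j=1}^{n-1} B^+(n-1,j,r-1) + Σ_{j=s}^{n-1} B^+(n-1,-j,r-1) + Σ_{j=1}^{s-1} B^+(n-1,-j,r) holds. -/

import Mathlib

open Finset Polynomial

/-- A signed permutation in the hyperoctahedral group `B_n`: a bijection of
`{±1,…,±n}` with `σ(-i) = -σ(i)`, encoded by its values on `1,…,n`
(extended by `0` elsewhere). -/
structure SignedPerm (n : ℕ) where
  toFun : ℕ → ℤ
  mem_abs : ∀ i ∈ Finset.Icc 1 n, (toFun i).natAbs ∈ Finset.Icc 1 n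
  inj_abs : ∀ i ∈ Finset.Icc 1 n, ∀ j ∈ Finset.Icc 1 n,
      (toFun i).natAbs = (toFun j).natAbs → i = j
  eq_zero : ∀ i, i ∉ Finset.Icc 1 n → toFun i = 0

/-- The extended word `σ_0 σ_1 ⋯ σ_n σ_{n+1}` with `σ_0 = 0` and
`σ_{n+1} = -∞` (modeled by `-(n+1)`, which is smaller than every entry). -/
def word {n : ℕ} (σ : SignedPerm n) (i : ℕ) : ℤ :=
  if i ≤ n then σ.toFun i else -(n + 1 : ℤ)

/-- The number of type-B descents: `|{i ∈ [0,n-1] : σ_i > σ_{i+1}}|`, `σ_0 = 0`. -/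
def desB {n : ℕ} (σ : SignedPerm n) : ℕ :=
  ((Finset.range n).filter (fun i => word σ (i + 1) < word σ i)).card

/-- `a` is the starting position of a slide of `σ`, i.e. of a maximal
decreasing run of length at least 2 in the extended word. -/
def IsSlideStart {n : ℕ} (σ : SignedPerm n) (a : ℕ) : Prop :=
  a ≤ n ∧ (a = 0 ∨ word σ (a - 1) < word σ a) ∧ word σ (a + 1) < word σ a

/-- The number of slides of `σ` (maximal decreasing runs of length ≥ 2 in the
extended word), counted via their starting positions. -/
def slides {n : ℕ} (σ : SignedPerm n) : ℕ :=
  ((Finset.range (n + 1)).filter (fun a =>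
      (a = 0 ∨ word σ (a - 1) < word σ a) ∧ word σ (a + 1) < word σ a)).card

/-- `B^+(n,j,r)`: the number of `σ ∈ B_n` with `σ_n > 0`, `σ_1 = j` and
exactly `r` type-B descents (`j`, `r` integers; the count is `0` for `r < 0`). -/
noncomputable def BP (n : ℕ) (j r : ℤ) : ℕ :=
  Nat.card {σ : SignedPerm n // 0 < σ.toFun n ∧ σ.toFun 1 = j ∧ (desB σ : ℤ) = r}

/-- `B^{++}(n,k)`: number of `σ ∈ B_n` with `σ_1 > 0`, `σ_n > 0`, `k` descents. -/
noncomputable def BPP (n k : ℕ) : ℕ :=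
  Nat.card {σ : SignedPerm n // 0 < σ.toFun 1 ∧ 0 < σ.toFun n ∧ desB σ = k}

/-- `B^{-+}(n,k)`: number of `σ ∈ B_n` with `σ_1 < 0`, `σ_n > 0`, `k` descents. -/
noncomputable def BMP (n k : ℕ) : ℕ :=
  Nat.card {σ : SignedPerm n // σ.toFun 1 < 0 ∧ 0 < σ.toFun n ∧ desB σ = k}

/-- `b^{++}(n,k,s)`: number of `σ ∈ B_n` with `σ_1 > 0`, `σ_n > 0`,
`k` descents and `s+1` slides. -/
noncomputable def bPP (n k s : ℕ) : ℕ :=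
  Nat.card {σ : SignedPerm n //
    0 < σ.toFun 1 ∧ 0 < σ.toFun n ∧ desB σ = k ∧ slides σ = s + 1}

/-- `b^{-+}(n,k,s)`: number of `σ ∈ B_n` with `σ_1 < 0`, `σ_n > 0`,
`k` descents and `s+1` slides. -/
noncomputable def bMP (n k s : ℕ) : ℕ :=
  Nat.card {σ : SignedPerm n //
    σ.toFun 1 < 0 ∧ 0 < σ.toFun n ∧ desB σ = k ∧ slides σ = s + 1}

/-- Number of `σ ∈ B_n` with `σ_n > 0` and `k` descents. -/
noncomputable def BplusCount (n k : ℕ) : ℕ :=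
  Nat.card {σ : SignedPerm n // 0 < σ.toFun n ∧ desB σ = k}

/-- Number of `σ ∈ B_n` with `k` descents. -/
noncomputable def Ball (n k : ℕ) : ℕ := Nat.card {σ : SignedPerm n // desB σ = k}

/-- The `j`-Eulerian polynomial of type `B^+`: `B^+_{n,j}(t) = Σ_r B^+(n,j,r) t^r`. -/
noncomputable def BPpoly (n : ℕ) (j : ℤ) : Polynomial ℤ :=
  ∑ r ∈ Finset.range (n + 1), Polynomial.C (BP n j (r : ℤ) : ℤ) * Polynomial.X ^ r

/-- The type-B Eulerian polynomial `B_n(t) = Σ_{σ ∈ B_n} t^{des_B σ}`. -/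
noncomputable def Bfullpoly (n : ℕ) : Polynomial ℤ :=
  ∑ k ∈ Finset.range (n + 1), Polynomial.C (Ball n k : ℤ) * Polynomial.X ^ k

/-- The symmetrized `j`-Eulerian polynomial `𝔹^+_{n,j}(t)`. -/
noncomputable def BsymPoly (n j : ℕ) : Polynomial ℤ :=
  if 2 * j = n + 1 then BPpoly n (j : ℤ)
  else BPpoly n (j : ℤ) + BPpoly n ((n : ℤ) + 1 - j)

/-!
Deleting the first letter `-s` of `σ ∈ B_n` and standardizing the remaining letters is a
bijection from `{σ ∈ B_n : σ_1 = -s}` onto `B_{n-1}` which preserves the sign of the last letter.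
Call the image `τ`. Position `0` is always a descent of `σ`, position `1` is one iff `τ_1 ≤ -s`,
and the later descents of `σ` are those of `τ` at positions `≥ 1`; position `0` is a descent of
`τ` iff `τ_1 < 0`. Hence `des_B σ = des_B τ` if `-s < τ_1 < 0` and `des_B σ = des_B τ + 1`
otherwise, and sorting `τ` by its first letter gives the three sums.
-/

/-- `openGap s` is the increasing bijection `ℤ → ℤ ∖ {±s}`, and `closeGap s` inverts it. -/
def openGap (s : ℕ) (v : ℤ) : ℤ :=
  if (s : ℤ) ≤ v then v + 1 else if v ≤ -(s : ℤ) then v - 1 else v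

def closeGap (s : ℕ) (v : ℤ) : ℤ :=
  if (s : ℤ) < v then v - 1 else if v < -(s : ℤ) then v + 1 else v

section Gap

variable {s : ℕ}

lemma natAbs_openGap (v : ℤ) :
    (openGap s v).natAbs = if s ≤ v.natAbs then v.natAbs + 1 else v.natAbs := by
  unfold openGap; split_ifs <;> omega

lemma natAbs_closeGap (v : ℤ) :
    (closeGap s v).natAbs = if s < v.natAbs then v.natAbs - 1 else v.natAbs := by
  unfold closeGap; split_ifs <;> omega

lemma openGap_zero (hs : 1 ≤ s) : openGap s 0 = 0 := by
  unfold openGap; split_ifs <;> omega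

lemma closeGap_zero : closeGap s 0 = 0 := by
  unfold closeGap; split_ifs <;> omega

lemma closeGap_openGap (v : ℤ) : closeGap s (openGap s v) = v := by
  unfold closeGap openGap; split_ifs <;> omega

lemma openGap_closeGap (hs : 1 ≤ s) {v : ℤ} (hv : v.natAbs ≠ s) :
    openGap s (closeGap s v) = v := by
  unfold closeGap openGap; split_ifs <;> omega

lemma strictMono_openGap : StrictMono (openGap s) := by
  intro v w h
  unfold openGap; split_ifs <;> omega

lemma openGap_pos_iff (hs : 1 ≤ s) {v : ℤ} : 0 < openGap s v ↔ 0 < v := by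
  unfold openGap; split_ifs <;> omega

lemma openGap_lt_neg_iff (hs : 1 ≤ s) {v : ℤ} : openGap s v < -(s : ℤ) ↔ v ≤ -(s : ℤ) := by
  unfold openGap; split_ifs <;> omega

end Gap

namespace SignedPerm

variable {n m k s : ℕ}

@[ext]
lemma ext {σ τ : SignedPerm n} (h : ∀ i, σ.toFun i = τ.toFun i) : σ = τ := by
  cases σ; cases τ; simp only [mk.injEq]; exact funext h

lemma natAbs_toFun_bounds (σ : SignedPerm n) {i : ℕ} (hi : 1 ≤ i) (hin : i ≤ n) :
    1 ≤ (σ.toFun i).natAbs ∧ (σ.toFun i).natAbs ≤ n :=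
  mem_Icc.mp (σ.mem_abs i (mem_Icc.mpr ⟨hi, hin⟩))

lemma eq_of_natAbs_toFun_eq (σ : SignedPerm n) {i j : ℕ} (hi : 1 ≤ i) (hin : i ≤ n)
    (hj : 1 ≤ j) (hjn : j ≤ n) (h : (σ.toFun i).natAbs = (σ.toFun j).natAbs) : i = j :=
  σ.inj_abs i (mem_Icc.mpr ⟨hi, hin⟩) j (mem_Icc.mpr ⟨hj, hjn⟩) h

lemma natAbs_toFun_ne (σ : SignedPerm n) {i j : ℕ} (hi : 1 ≤ i) (hin : i ≤ n)
    (hj : 1 ≤ j) (hjn : j ≤ n) (hij : i ≠ j) : (σ.toFun i).natAbs ≠ (σ.toFun j).natAbs :=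
  mt (σ.eq_of_natAbs_toFun_eq hi hin hj hjn) hij

lemma toFun_zero (σ : SignedPerm n) : σ.toFun 0 = 0 :=
  σ.eq_zero 0 (by simp)

instance : Finite (SignedPerm n) := by
  let box := Icc (-(n : ℤ)) n
  have mem_box (σ : SignedPerm n) (i : Icc 1 n) : σ.toFun i ∈ box := by
    have := σ.natAbs_toFun_bounds (mem_Icc.mp i.2).1 (mem_Icc.mp i.2).2
    simp only [box, mem_Icc]
    omega
  refine Finite.of_injective (fun σ (i : Icc 1 n) => (⟨σ.toFun i, mem_box σ i⟩ : box)) ?_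
  intro σ τ h
  ext i
  by_cases hi : i ∈ Icc 1 n
  · exact congrArg Subtype.val (congrFun h ⟨i, hi⟩)
  · rw [σ.eq_zero i hi, τ.eq_zero i hi]

lemma desB_eq_card (σ : SignedPerm n) :
    desB σ = #{i ∈ range n | σ.toFun (i + 1) < σ.toFun i} := by
  refine congrArg card (filter_congr fun i hi => ?_)
  have hi : i < n := mem_range.mp hi
  simp only [word, if_pos hi.le, if_pos (Nat.succ_le_of_lt hi)]

def consNeg (s : ℕ) (hs : 1 ≤ s) (hsm : s ≤ m + 1) (τ : SignedPerm m) :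
    SignedPerm (m + 1) where
  toFun i := if i = 1 then -(s : ℤ) else openGap s (τ.toFun (i - 1))
  mem_abs i hi := by
    obtain ⟨hi1, hin⟩ := mem_Icc.mp hi
    rw [mem_Icc]
    split_ifs
    · omega
    · have := τ.natAbs_toFun_bounds (i := i - 1) (by omega) (by omega)
      rw [natAbs_openGap]
      split_ifs <;> omega
  inj_abs i hi j hj h := by
    obtain ⟨hi1, hin⟩ := mem_Icc.mp hi
    obtain ⟨hj1, hjn⟩ := mem_Icc.mp hj
    split_ifs at h
    · omega
    · rw [natAbs_openGap] at h; split_ifs at h <;> omega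
    · rw [natAbs_openGap] at h; split_ifs at h <;> omega
    · have := τ.eq_of_natAbs_toFun_eq (i := i - 1) (j := j - 1) (by omega) (by omega)
        (by omega) (by omega) <| by
          rw [natAbs_openGap, natAbs_openGap] at h
          split_ifs at h <;> omega
      omega
  eq_zero i hi := by
    rw [mem_Icc] at hi
    rw [if_neg (by omega), τ.eq_zero (i - 1) (by rw [mem_Icc]; omega), openGap_zero hs]

def dropHead (σ : SignedPerm (m + 1)) : SignedPerm m where
  toFun i := if i = 0 then 0 else closeGap (σ.toFun 1).natAbs (σ.toFun (i + 1))
  mem_abs i hi := by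
    obtain ⟨hi1, hin⟩ := mem_Icc.mp hi
    have h1 := σ.natAbs_toFun_bounds (i := 1) le_rfl (by omega)
    have hi := σ.natAbs_toFun_bounds (i := i + 1) (by omega) (by omega)
    have hne := σ.natAbs_toFun_ne (i := i + 1) (j := 1) (by omega) (by omega) le_rfl
      (by omega) (by omega)
    rw [mem_Icc, if_neg (by omega), natAbs_closeGap]
    split_ifs <;> omega
  inj_abs i hi j hj h := by
    obtain ⟨hi1, hin⟩ := mem_Icc.mp hi
    obtain ⟨hj1, hjn⟩ := mem_Icc.mp hj
    have := σ.natAbs_toFun_ne (i := i + 1) (j := 1) (by omega) (by omega) le_rfl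
      (by omega) (by omega)
    have := σ.natAbs_toFun_ne (i := j + 1) (j := 1) (by omega) (by omega) le_rfl
      (by omega) (by omega)
    rw [if_neg (by omega), if_neg (by omega), natAbs_closeGap, natAbs_closeGap] at h
    have := σ.eq_of_natAbs_toFun_eq (i := i + 1) (j := j + 1) (by omega) (by omega)
      (by omega) (by omega) (by split_ifs at h <;> omega)
    omega
  eq_zero i hi := by
    rw [mem_Icc] at hi
    split_ifs
    · rfl
    · rw [σ.eq_zero (i + 1) (by rw [mem_Icc]; omega), closeGap_zero]

lemma consNeg_toFun_one (hs : 1 ≤ s) (hsm : s ≤ m + 1) (τ : SignedPerm m) :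
    (consNeg s hs hsm τ).toFun 1 = -(s : ℤ) := rfl

lemma consNeg_toFun_succ (hs : 1 ≤ s) (hsm : s ≤ m + 1) (τ : SignedPerm m) {i : ℕ}
    (hi : 1 ≤ i) : (consNeg s hs hsm τ).toFun (i + 1) = openGap s (τ.toFun i) := by
  simp only [consNeg, if_neg (show i + 1 ≠ 1 by omega), Nat.add_sub_cancel]

lemma dropHead_consNeg (hs : 1 ≤ s) (hsm : s ≤ m + 1) (τ : SignedPerm m) :
    dropHead (consNeg s hs hsm τ) = τ := by
  ext i
  rcases Nat.eq_zero_or_pos i with rfl | hi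
  · exact τ.toFun_zero.symm
  · simp only [dropHead, if_neg hi.ne', consNeg_toFun_one, consNeg_toFun_succ hs hsm τ hi,
      Int.natAbs_neg, Int.natAbs_natCast, closeGap_openGap]

lemma consNeg_dropHead (hs : 1 ≤ s) (hsm : s ≤ m + 1) {σ : SignedPerm (m + 1)}
    (hσ : σ.toFun 1 = -(s : ℤ)) : consNeg s hs hsm (dropHead σ) = σ := by
  ext i
  rcases lt_trichotomy i 1 with hi | rfl | hi
  · rw [Nat.lt_one_iff.mp hi, toFun_zero, toFun_zero]
  · exact hσ.symm
  obtain ⟨k, rfl⟩ : ∃ k, i = k + 1 := ⟨i - 1, by omega⟩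
  rw [consNeg_toFun_succ hs hsm _ (by omega)]
  simp only [dropHead, if_neg (show k ≠ 0 by omega), hσ, Int.natAbs_neg, Int.natAbs_natCast]
  by_cases hk : k + 1 ≤ m + 1
  · refine openGap_closeGap hs ?_
    have := σ.natAbs_toFun_ne (i := k + 1) (j := 1) (by omega) hk le_rfl (by omega) (by omega)
    omega
  · rw [σ.eq_zero (k + 1) (by rw [mem_Icc]; omega), closeGap_zero, openGap_zero hs]

lemma desB_consNeg (hs : 1 ≤ s) (hsk : s ≤ k + 2) (τ : SignedPerm (k + 1)) :
    desB (consNeg s hs hsk τ) + (if τ.toFun 1 < 0 then 1 else 0) =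
      desB τ + 1 + if τ.toFun 1 ≤ -(s : ℤ) then 1 else 0 := by
  set σ := consNeg s hs hsk τ
  have hσ_succ (i : ℕ) : σ.toFun (i + 1 + 1) = openGap s (τ.toFun (i + 1)) :=
    consNeg_toFun_succ hs hsk τ (by omega)
  have hσ_one : σ.toFun 1 = -(s : ℤ) := consNeg_toFun_one hs hsk τ
  simp only [desB_eq_card, card_filter, sum_range_succ', toFun_zero, hσ_succ, hσ_one,
    strictMono_openGap.lt_iff_lt, openGap_lt_neg_iff hs]
  split_ifs <;> omega

end SignedPerm

section Counting

variable {α β : Type*} [Finite α]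

lemma Nat.card_subtype_or_of_disjoint {p q : α → Prop} (h : ∀ x, p x → ¬ q x) :
    Nat.card {x // p x ∨ q x} = Nat.card {x // p x} + Nat.card {x // q x} := by
  classical
  have := Fintype.ofFinite α
  simp only [Nat.card_eq_fintype_card]
  exact Fintype.card_subtype_or_disjoint p q fun r hp hq x hx => h x (hp x hx) (hq x hx)

lemma Nat.card_subtype_eq_sum_card_fiber (p : α → Prop) (f : α → β)
    (t : Finset β) (h : ∀ x, p x → f x ∈ t) :
    Nat.card {x // p x} = ∑ v ∈ t, Nat.card {x // p x ∧ f x = v} := by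
  classical
  have := Fintype.ofFinite α
  simp only [Nat.card_eq_fintype_card, Fintype.card_subtype, ← filter_filter]
  exact card_eq_sum_card_fiberwise fun x hx => h x (mem_filter.mp hx).2

end Counting

lemma card_toFun_one_eq_sum_BP (m : ℕ) (c : ℤ) (p : ℤ → Prop) (g : ℕ ↪ ℤ) (t : Finset ℕ)
    (hp : ∀ x : SignedPerm m, p (x.toFun 1) ↔ ∃ j ∈ t, g j = x.toFun 1) :
    Nat.card {x : SignedPerm m // 0 < x.toFun m ∧ p (x.toFun 1) ∧ (desB x : ℤ) = c} =
      ∑ j ∈ t, BP m (g j) c := by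
  rw [Nat.card_subtype_eq_sum_card_fiber _ (fun x => x.toFun 1) (t.map g)
    fun x hx => mem_map.mpr ((hp x).mp hx.2.1), sum_map]
  refine sum_congr rfl fun j hj => Nat.card_congr (Equiv.subtypeEquivRight fun x => ?_)
  constructor
  · rintro ⟨⟨hlast, -, hdes⟩, hfirst⟩
    exact ⟨hlast, hfirst, hdes⟩
  · rintro ⟨hlast, hfirst, hdes⟩
    exact ⟨⟨hlast, (hp x).mpr ⟨j, hj, hfirst.symm⟩, hdes⟩, hfirst⟩

lemma BP_neg_eq_card_add_card_add_card {k s : ℕ} (hs : 1 ≤ s) (hsk : s ≤ k + 2) (r : ℤ) :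
    BP (k + 2) (-(s : ℤ)) r =
      Nat.card {τ : SignedPerm (k + 1) //
        0 < τ.toFun (k + 1) ∧ 0 < τ.toFun 1 ∧ (desB τ : ℤ) = r - 1} +
      Nat.card {τ : SignedPerm (k + 1) //
        0 < τ.toFun (k + 1) ∧ τ.toFun 1 ≤ -(s : ℤ) ∧ (desB τ : ℤ) = r - 1} +
      Nat.card {τ : SignedPerm (k + 1) //
        0 < τ.toFun (k + 1) ∧ (-(s : ℤ) < τ.toFun 1 ∧ τ.toFun 1 < 0) ∧ (desB τ : ℤ) = r} := by
  rw [← Nat.card_subtype_or_of_disjoint (by omega), ← Nat.card_subtype_or_of_disjoint (by omega)]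
  have key (τ : SignedPerm (k + 1)) :
      (0 < (τ.consNeg s hs hsk).toFun (k + 2) ∧ (desB (τ.consNeg s hs hsk) : ℤ) = r) ↔
        ((0 < τ.toFun (k + 1) ∧ 0 < τ.toFun 1 ∧ (desB τ : ℤ) = r - 1) ∨
          (0 < τ.toFun (k + 1) ∧ τ.toFun 1 ≤ -(s : ℤ) ∧ (desB τ : ℤ) = r - 1)) ∨
          (0 < τ.toFun (k + 1) ∧ (-(s : ℤ) < τ.toFun 1 ∧ τ.toFun 1 < 0) ∧ (desB τ : ℤ) = r) := by
    rw [SignedPerm.consNeg_toFun_succ hs hsk τ (by omega), openGap_pos_iff hs]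
    have hdes := SignedPerm.desB_consNeg hs hsk τ
    have := τ.natAbs_toFun_bounds le_rfl (by omega)
    split_ifs at hdes <;> omega
  exact Nat.card_congr
    { toFun σ := ⟨σ.1.dropHead, (key _).mp <| by
        rw [SignedPerm.consNeg_dropHead hs hsk σ.2.2.1]; exact ⟨σ.2.1, σ.2.2.2⟩⟩
      invFun τ := ⟨τ.1.consNeg s hs hsk, ((key τ.1).mpr τ.2).1, rfl, ((key τ.1).mpr τ.2).2⟩
      left_inv σ := Subtype.ext (SignedPerm.consNeg_dropHead hs hsk σ.2.2.1)
      right_inv τ := Subtype.ext (SignedPerm.dropHead_consNeg hs hsk τ.1) }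

theorem stmt3_general (n s r : ℕ) (hn : 2 ≤ n) (hs1 : 1 ≤ s) (hsn : s ≤ n) :
    BP n (-(s : ℤ)) (r : ℤ) =
      (∑ j ∈ Finset.Icc 1 (n - 1), BP (n - 1) (j : ℤ) ((r : ℤ) - 1)) +
      (∑ j ∈ Finset.Icc s (n - 1), BP (n - 1) (-(j : ℤ)) ((r : ℤ) - 1)) +
      (∑ j ∈ Finset.Icc 1 (s - 1), BP (n - 1) (-(j : ℤ)) (r : ℤ)) := by
  obtain ⟨k, rfl⟩ : ∃ k, n = k + 2 := ⟨n - 2, by omega⟩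
  let negCast : ℕ ↪ ℤ := Nat.castEmbedding.trans (Equiv.neg ℤ).toEmbedding
  have first_bounds (τ : SignedPerm (k + 1)) := τ.natAbs_toFun_bounds le_rfl (by omega)
  rw [BP_neg_eq_card_add_card_add_card hs1 hsn,
    card_toFun_one_eq_sum_BP _ _ (0 < ·) Nat.castEmbedding (Icc 1 (k + 1)) fun τ => ?pos,
    card_toFun_one_eq_sum_BP _ _ (· ≤ -(s : ℤ)) negCast (Icc s (k + 1)) fun τ => ?low,
    card_toFun_one_eq_sum_BP _ _ (fun v => -(s : ℤ) < v ∧ v < 0) negCast (Icc 1 (s - 1))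
      fun τ => ?high]
  · rfl
  case pos | low | high =>
    have := first_bounds τ
    simp only [mem_Icc, negCast, Function.Embedding.trans_apply, Nat.castEmbedding_apply,
      Equiv.toEmbedding_apply, Equiv.neg_apply]
    exact ⟨fun h => ⟨(τ.toFun 1).natAbs, by omega, by omega⟩, fun ⟨j, hj, hjτ⟩ => by omega⟩

/-- Recurrence for `B^+(n,-s,r)`. -/
theorem stmt3 (n s r : ℕ) (hn : 2 ≤ n) (hs1 : 1 ≤ s) (hsn : s ≤ n) (hr : r ≤ n - 1) :
    BP n (-(s : ℤ)) (r : ℤ) =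
      (∑ j ∈ Finset.Icc 1 (n - 1), BP (n - 1) (j : ℤ) ((r : ℤ) - 1)) +
      (∑ j ∈ Finset.Icc s (n - 1), BP (n - 1) (-(j : ℤ)) ((r : ℤ) - 1)) +
      (∑ j ∈ Finset.Icc 1 (s - 1), BP (n - 1) (-(j : ℤ)) (r : ℤ)) :=
  stmt3_general n s r hn hs1 hsn
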